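/- Block independence is preserved under i.i.d. products: if p_{XYZ} is uniformly block independent (UBI), then the n-fold product distribution p_{XYZ}^{⊗n} on 𝒳ⁿ × 𝒴ⁿ × 𝒵ⁿ is also uniformly block independent, with maximal conditional common function equal to the n-tuple of blockwise common functions, and H(J^{(n)}|Zⁿ) = n·H(J_{XY|Z}|Z). -/

import Mathlib

open scoped BigOperators
open Real

/-- Entropy (in bits) of the pushforward of a finitely supported measure `P` along `f`. -/
noncomputable def Hof {Ω W : Type*} [Fintype Ω] [DecidableEq W] (P : Ω → ℝ) (f : Ω → W) : ℝ :=
  ∑ w ∈ Finset.image f Finset.univ,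
    -((∑ ω ∈ Finset.univ.filter fun ω => f ω = w, P ω) *
        Real.logb 2 (∑ ω ∈ Finset.univ.filter fun ω => f ω = w, P ω))

/-- `f` and `g` form a common function of a bipartite distribution `q`: they agree on
the support of `q`. -/
def IsCommonFn {X Y W : Type*} (q : X → Y → ℝ) (f : X → W) (g : Y → W) : Prop :=
  ∀ x y, 0 < q x y → f x = g y

/-- `(f, g)` is a *maximal* common function of `q`: any other common function is,
on the support, a function of it. -/
def IsMaxCommonFn {X Y W : Type*} (q : X → Y → ℝ) (f : X → W) (g : Y → W) : Prop :=
  IsCommonFn q f g ∧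
    ∀ (f' : X → ℕ) (g' : Y → ℕ), IsCommonFn q f' g' →
      ∃ F : W → ℕ, ∀ x y, 0 < q x y → f' x = F (f x)

/-- `p_{XYZ}` is uniformly block independent (UBI) with respect to the maximal conditional
common function `(jX, jY)`: `(jX z, jY z)` is a maximal common function of `p_{XY|Z=z}`
for each `z` in the support, `I(X:Y|J,Z) = 0`, and `H(J|X) = H(J|Y) = 0`. -/
def IsUBI {X Y Z W : Type*} [Fintype X] [Fintype Y] [Fintype Z]
    [DecidableEq X] [DecidableEq Y] [DecidableEq Z] [DecidableEq W]
    (p : X → Y → Z → ℝ) (jX : Z → X → W) (jY : Z → Y → W) : Prop :=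
  (∀ z, 0 < (∑ x, ∑ y, p x y z) →
      IsMaxCommonFn (fun x y => p x y z) (jX z) (jY z)) ∧
  -- I(X:Y | J,Z) = 0
  (Hof (fun ω : X × Y × Z => p ω.1 ω.2.1 ω.2.2)
        (fun ω => (ω.1, jX ω.2.2 ω.1, ω.2.2)) +
      Hof (fun ω : X × Y × Z => p ω.1 ω.2.1 ω.2.2)
        (fun ω => (ω.2.1, jX ω.2.2 ω.1, ω.2.2)) -
      Hof (fun ω : X × Y × Z => p ω.1 ω.2.1 ω.2.2)
        (fun ω => (ω.1, ω.2.1, jX ω.2.2 ω.1, ω.2.2)) -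
      Hof (fun ω : X × Y × Z => p ω.1 ω.2.1 ω.2.2)
        (fun ω => (jX ω.2.2 ω.1, ω.2.2)) = 0) ∧
  -- H(J|X) = 0
  (Hof (fun ω : X × Y × Z => p ω.1 ω.2.1 ω.2.2) (fun ω => (jX ω.2.2 ω.1, ω.1)) -
      Hof (fun ω : X × Y × Z => p ω.1 ω.2.1 ω.2.2) (fun ω => ω.1) = 0) ∧
  -- H(J|Y) = 0
  (Hof (fun ω : X × Y × Z => p ω.1 ω.2.1 ω.2.2) (fun ω => (jY ω.2.2 ω.2.1, ω.2.1)) -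
      Hof (fun ω : X × Y × Z => p ω.1 ω.2.1 ω.2.2) (fun ω => ω.2.1) = 0)

/-!
Every entropy in the definition of UBI, computed for `p^{⊗n}` with the coordinatewise common
function, is `n` times its single-letter value: a coordinatewise feature of an i.i.d. tuple has
i.i.d. coordinates, and Shannon entropy is additive over independent coordinates.

For maximality, take two points of the product support with the same blockwise common function.
In each coordinate `k`, maximality of `J_{XY|Z=z_k}` puts them in the same connected component of
the bipartite support graph of `p_{XY|Z=z_k}`, because the indicator of a component is itself a
common function. Moving one coordinate at a time along such paths never leaves the product support,
and any common function of the product is constant along these moves.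
-/

open Finset Function

section Entropy

variable {Ω W : Type*} [Fintype Ω] [DecidableEq W]

theorem Hof_eq_neg_sum (P : Ω → ℝ) (f : Ω → W) :
    Hof P f = -∑ ω, P ω * logb 2 (∑ ω' with f ω' = f ω, P ω') := by
  rw [Hof, ← sum_fiberwise_of_maps_to (g := f) (t := univ.image f)
    (fun ω _ => mem_image_of_mem f (mem_univ ω)), ← sum_neg_distrib]
  refine sum_congr rfl fun w _ => ?_
  rw [sum_mul]
  congr 1
  refine sum_congr rfl fun ω hω => ?_
  rw [(mem_filter.1 hω).2]

theorem Hof_congr {V : Type*} [DecidableEq V] (P : Ω → ℝ) {f : Ω → W} {f' : Ω → V}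
    (h : ∀ a b, f a = f b ↔ f' a = f' b) : Hof P f = Hof P f' := by
  simp only [Hof_eq_neg_sum, h]

theorem Hof_comp_equiv {Ω' : Type*} [Fintype Ω'] (P : Ω → ℝ) (f : Ω → W) (e : Ω' ≃ Ω) :
    Hof (P ∘ e) (f ∘ e) = Hof P f := by
  have fiber (ω : Ω) : ∑ ω', (if f (e ω') = f ω then P (e ω') else 0) =
      ∑ ω', if f ω' = f ω then P ω' else 0 :=
    e.sum_comp fun ω' => if f ω' = f ω then P ω' else 0
  simp only [Hof_eq_neg_sum, sum_filter, comp_apply, fiber]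
  exact congrArg Neg.neg (e.sum_comp fun ω => P ω * logb 2 (∑ ω', if f ω' = f ω then P ω' else 0))

theorem sum_pi_prod_mul_apply {ι R : Type*} [Fintype ι] [DecidableEq ι] [CommSemiring R]
    (P : Ω → R) (hP : ∑ ω, P ω = 1) (h : Ω → R) (k : ι) :
    ∑ ν : ι → Ω, (∏ j, P (ν j)) * h (ν k) = ∑ ω, P ω * h ω := by
  have factor (ν : ι → Ω) :
      (∏ j, P (ν j)) * h (ν k) = ∏ j, P (ν j) * if j = k then h (ν j) else 1 := by
    rw [prod_mul_distrib, prod_ite_eq' univ k, if_pos (mem_univ k)]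
  calc ∑ ν : ι → Ω, (∏ j, P (ν j)) * h (ν k)
      = ∑ ν : ι → Ω, ∏ j, P (ν j) * if j = k then h (ν j) else 1 := by simp only [factor]
    _ = ∏ j, ∑ ω, P ω * if j = k then h ω else 1 :=
        (Fintype.prod_sum fun j ω => P ω * if j = k then h ω else 1).symm
    _ = ∏ j, if j = k then ∑ ω, P ω * h ω else 1 :=
        prod_congr rfl fun j _ => by split_ifs <;> simp [hP]
    _ = ∑ ω, P ω * h ω := by rw [prod_ite_eq' univ k, if_pos (mem_univ k)]

theorem sum_pi_filter_prod {ι R : Type*} [Fintype ι] [DecidableEq ι] [CommSemiring R]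
    (P : Ω → R) (f : Ω → W) (w : ι → W) :
    ∑ ν : ι → Ω with ∀ k, f (ν k) = w k, ∏ k, P (ν k) = ∏ k, ∑ ω with f ω = w k, P ω := by
  rw [prod_univ_sum]
  congr 1
  ext ν
  simp [Fintype.mem_piFinset]

theorem prod_mul_logb_prod {ι : Type*} (s : Finset ι) (a b : ι → ℝ)
    (hab : ∀ k ∈ s, b k = 0 → a k = 0) :
    (∏ k ∈ s, a k) * logb 2 (∏ k ∈ s, b k) = ∑ k ∈ s, (∏ j ∈ s, a j) * logb 2 (b k) := by
  by_cases hb : ∃ k ∈ s, b k = 0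
  · obtain ⟨k, hk, hbk⟩ := hb
    simp [prod_eq_zero hk (hab k hk hbk)]
  · rw [logb_prod s b fun k hk hbk => hb ⟨k, hk, hbk⟩, mul_sum]

theorem Hof_pi {ι : Type*} [Fintype ι] [DecidableEq ι] (P : Ω → ℝ) (h0 : ∀ ω, 0 ≤ P ω)
    (h1 : ∑ ω, P ω = 1) (f : Ω → W) :
    Hof (fun ν : ι → Ω => ∏ k, P (ν k)) (fun ν k => f (ν k)) = Fintype.card ι * Hof P f := by
  let r : Ω → ℝ := fun ω => ∑ ω' with f ω' = f ω, P ω'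
  have le_r (ω : Ω) : P ω ≤ r ω :=
    single_le_sum (fun ω' _ => h0 ω') (mem_filter.2 ⟨mem_univ ω, rfl⟩)
  have fiber (ν : ι → Ω) :
      ∑ ν' : ι → Ω with (fun k => f (ν' k)) = fun k => f (ν k), ∏ k, P (ν' k) = ∏ k, r (ν k) := by
    simp only [funext_iff]
    exact sum_pi_filter_prod P f _
  have log_prod (ν : ι → Ω) : (∏ k, P (ν k)) * logb 2 (∏ k, r (ν k)) =
      ∑ k, (∏ j, P (ν j)) * logb 2 (r (ν k)) :=
    prod_mul_logb_prod _ _ _ fun k _ hk => le_antisymm (hk ▸ le_r (ν k)) (h0 (ν k))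
  calc Hof (fun ν : ι → Ω => ∏ k, P (ν k)) (fun ν k => f (ν k))
      = -∑ ν : ι → Ω, ∑ k, (∏ j, P (ν j)) * logb 2 (r (ν k)) := by
        simp only [Hof_eq_neg_sum, fiber, log_prod]
    _ = -∑ _k : ι, ∑ ω, P ω * logb 2 (r ω) := by
        rw [sum_comm]
        simp only [sum_pi_prod_mul_apply P h1 fun ω => logb 2 (r ω)]
    _ = Fintype.card ι * Hof P f := by
        rw [Hof_eq_neg_sum, sum_const, card_univ, nsmul_eq_mul, mul_neg]

theorem Hof_iid {ι X Y Z V : Type*} [Fintype ι] [DecidableEq ι] [Fintype X] [Fintype Y]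
    [Fintype Z] [DecidableEq V] {p : X → Y → Z → ℝ} (hp0 : ∀ x y z, 0 ≤ p x y z)
    (hp1 : ∑ x, ∑ y, ∑ z, p x y z = 1) (g : X × Y × Z → W)
    {f : (ι → X) × (ι → Y) × (ι → Z) → V}
    (hf : ∀ ω ω', f ω = f ω' ↔
      ∀ k, g (ω.1 k, ω.2.1 k, ω.2.2 k) = g (ω'.1 k, ω'.2.1 k, ω'.2.2 k)) :
    Hof (fun ω => ∏ k, p (ω.1 k) (ω.2.1 k) (ω.2.2 k)) f =
      Fintype.card ι * Hof (fun ω : X × Y × Z => p ω.1 ω.2.1 ω.2.2) g := by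
  let e : (ι → X × Y × Z) ≃ (ι → X) × (ι → Y) × (ι → Z) :=
    (Equiv.arrowProdEquivProdArrow _ _ _).trans
      (Equiv.prodCongr (Equiv.refl _) (Equiv.arrowProdEquivProdArrow _ _ _))
  rw [Hof_congr _ (f' := fun ω k => g (ω.1 k, ω.2.1 k, ω.2.2 k)) (by simpa [funext_iff] using hf),
    ← Hof_comp_equiv _ _ e]
  exact Hof_pi (ι := ι) (fun ω : X × Y × Z => p ω.1 ω.2.1 ω.2.2) (fun ω => hp0 ω.1 ω.2.1 ω.2.2)
    (by simpa [Fintype.sum_prod_type] using hp1) g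

end Entropy

section CommonFunction

open Relation

variable {X Y W : Type*}

def SupportAdj (q : X → Y → ℝ) (a a' : X) : Prop :=
  ∃ b, 0 < q a b ∧ 0 < q a' b

theorem IsCommonFn.eq_of_reflTransGen {q : X → Y → ℝ} {f : X → W} {g : Y → W}
    (h : IsCommonFn q f g) {a a' : X} (ha : ReflTransGen (SupportAdj q) a a') : f a = f a' := by
  induction ha with
  | refl => rfl
  | tail _ hadj ih =>
    obtain ⟨b, hb, hb'⟩ := hadj
    exact ih.trans ((h _ _ hb).trans (h _ _ hb').symm)

theorem IsMaxCommonFn.reflTransGen_of_eq {q : X → Y → ℝ} {jx : X → W} {jy : Y → W}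
    (h : IsMaxCommonFn q jx jy) {a a' : X} {b b' : Y} (hab : 0 < q a b) (hab' : 0 < q a' b')
    (hj : jx a = jx a') : ReflTransGen (SupportAdj q) a a' := by
  classical
  -- the indicator of the connected component of `a` is a common function
  let c : X → ℕ := fun x => if ReflTransGen (SupportAdj q) a x then 1 else 0
  let d : Y → ℕ := fun y => if ∃ x, ReflTransGen (SupportAdj q) a x ∧ 0 < q x y then 1 else 0
  have hcd : IsCommonFn q c d := fun x y hxy =>
    if_congr ⟨fun hx => ⟨x, hx, hxy⟩, fun ⟨_, hx', hx'y⟩ => hx'.tail ⟨y, hx'y, hxy⟩⟩ rfl rfl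
  obtain ⟨F, hF⟩ := h.2 c d hcd
  have : c a' = c a := by rw [hF a' b' hab', hF a b hab, hj]
  simpa [c, ReflTransGen.refl] using this

theorem SupportAdj.exists_pos_of_reflTransGen {q : X → Y → ℝ} {a a' : X}
    (h : ReflTransGen (SupportAdj q) a a') (ha : ∃ b, 0 < q a b) : ∃ b, 0 < q a' b := by
  cases h.cases_tail with
  | inl h => exact h ▸ ha
  | inr h => obtain ⟨_, _, b, _, hb⟩ := h; exact ⟨b, hb⟩

variable {ι : Type*} [Fintype ι] {q : ι → X → Y → ℝ}

theorem reflTransGen_pi_update [DecidableEq ι] {x : ι → X} (hx : ∀ k, ∃ b, 0 < q k (x k) b)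
    {k : ι} {a : X} (ha : ReflTransGen (SupportAdj (q k)) (x k) a) :
    ReflTransGen (SupportAdj fun (x : ι → X) (y : ι → Y) => ∏ k, q k (x k) (y k))
      x (update x k a) := by
  choose y hy using hx
  induction ha with
  | refl => rw [update_eq_self]
  | tail _ hadj ih =>
    obtain ⟨b, hb, hb'⟩ := hadj
    refine ih.tail ⟨update y k b, prod_pos fun i _ => ?_, prod_pos fun i _ => ?_⟩ <;>
      rcases eq_or_ne i k with rfl | hi <;> simp_all

theorem reflTransGen_pi {x x' : ι → X} (hx : ∀ k, ∃ b, 0 < q k (x k) b)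
    (h : ∀ k, ReflTransGen (SupportAdj (q k)) (x k) (x' k)) :
    ReflTransGen (SupportAdj fun (x : ι → X) (y : ι → Y) => ∏ k, q k (x k) (y k)) x x' := by
  classical
  suffices ∀ s : Finset ι, ReflTransGen _ x (s.piecewise x' x) by simpa using this univ
  intro s
  induction s using Finset.induction_on with
  | empty => simpa using ReflTransGen.refl
  | insert k s hk ih =>
    rw [piecewise_insert]
    refine ih.trans (reflTransGen_pi_update (fun i => ?_) ?_)
    · by_cases hi : i ∈ s
      · rw [piecewise_eq_of_mem _ _ _ hi]
        exact SupportAdj.exists_pos_of_reflTransGen (h i) (hx i)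
      · rw [piecewise_eq_of_notMem _ _ _ hi]
        exact hx i
    · rw [piecewise_eq_of_notMem _ _ _ hk]
      exact h k

theorem pos_of_prod_pos {a : ι → ℝ} (ha : ∀ k, 0 ≤ a k) (h : 0 < ∏ k, a k) (k : ι) : 0 < a k :=
  (ha k).lt_of_ne (prod_ne_zero_iff.1 h.ne' k (mem_univ k)).symm

theorem IsMaxCommonFn.pi {jx : ι → X → W} {jy : ι → Y → W} (hq : ∀ k a b, 0 ≤ q k a b)
    (h : ∀ k, IsMaxCommonFn (q k) (jx k) (jy k)) :
    IsMaxCommonFn (fun (x : ι → X) (y : ι → Y) => ∏ k, q k (x k) (y k))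
      (fun x k => jx k (x k)) (fun y k => jy k (y k)) := by
  have pos {x : ι → X} {y : ι → Y} (hxy : 0 < ∏ k, q k (x k) (y k)) :=
    pos_of_prod_pos (fun k => hq k (x k) (y k)) hxy
  refine ⟨fun x y hxy => funext fun k => (h k).1 _ _ (pos hxy k), fun f g hfg => ?_⟩
  let S := {x : ι → X // ∃ y : ι → Y, 0 < ∏ k, q k (x k) (y k)}
  have factors : FactorsThrough (fun s : S => f s) (fun s k => jx k (s.1 k)) := by
    rintro ⟨x, y, hxy⟩ ⟨x', y', hxy'⟩ hj
    refine hfg.eq_of_reflTransGen (reflTransGen_pi (fun k => ⟨_, pos hxy k⟩) fun k => ?_)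
    exact (h k).reflTransGen_of_eq (pos hxy k) (pos hxy' k) (congrFun hj k)
  exact ⟨extend (fun (s : S) k => jx k (s.1 k)) (fun s => f s) 0,
    fun x y hxy => (factors.extend_apply 0 ⟨x, y, hxy⟩).symm⟩

end CommonFunction

/-- Uniform block independence is preserved under i.i.d. products: if `p_{XYZ}` is UBI
with maximal conditional common function `J`, then the `n`-fold product distribution is
UBI with maximal conditional common function the `n`-tuple of blockwise common functions,
and `H(J^{(n)}|Z^n) = n · H(J|Z)`. -/
theorem UBI_iid_product {X Y Z : Type*} [Fintype X] [Fintype Y] [Fintype Z]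
    [DecidableEq X] [DecidableEq Y] [DecidableEq Z]
    (p : X → Y → Z → ℝ) (hp0 : ∀ x y z, 0 ≤ p x y z)
    (hp1 : ∑ x, ∑ y, ∑ z, p x y z = 1)
    (jX : Z → X → ℕ) (jY : Z → Y → ℕ) (hubi : IsUBI p jX jY) (n : ℕ) :
    IsUBI (fun (x : Fin n → X) (y : Fin n → Y) (z : Fin n → Z) =>
        ∏ k, p (x k) (y k) (z k))
      (fun z x k => jX (z k) (x k)) (fun z y k => jY (z k) (y k)) ∧
    Hof (fun ω : (Fin n → X) × (Fin n → Y) × (Fin n → Z) =>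
          ∏ k, p (ω.1 k) (ω.2.1 k) (ω.2.2 k))
        (fun ω => (fun k => jX (ω.2.2 k) (ω.1 k), ω.2.2)) -
      Hof (fun ω : (Fin n → X) × (Fin n → Y) × (Fin n → Z) =>
          ∏ k, p (ω.1 k) (ω.2.1 k) (ω.2.2 k)) (fun ω => ω.2.2)
      = n * (Hof (fun ω : X × Y × Z => p ω.1 ω.2.1 ω.2.2)
              (fun ω => (jX ω.2.2 ω.1, ω.2.2)) -
             Hof (fun ω : X × Y × Z => p ω.1 ω.2.1 ω.2.2) (fun ω => ω.2.2)) := by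
  obtain ⟨hmax, hI, hJX, hJY⟩ := hubi
  refine ⟨⟨fun z hz => ?_, ?_, ?_, ?_⟩, ?_⟩
  · have hz' : 0 < ∏ k, ∑ a, ∑ b, p a b (z k) := by simpa only [Fintype.prod_sum] using hz
    refine IsMaxCommonFn.pi (fun k => (hp0 · · (z k))) fun k => hmax (z k) ?_
    exact pos_of_prod_pos (fun k => sum_nonneg fun a _ => sum_nonneg fun b _ => hp0 a b (z k)) hz' k
  -- Each `Hof_iid` rewrites the leftmost remaining product entropy; its side goal checks that
  -- this entropy's feature is the coordinatewise lift of the given single-letter one.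
  · rw [Hof_iid hp0 hp1 (fun ω => (ω.1, jX ω.2.2 ω.1, ω.2.2)),
      Hof_iid hp0 hp1 (fun ω => (ω.2.1, jX ω.2.2 ω.1, ω.2.2)),
      Hof_iid hp0 hp1 (fun ω => (ω.1, ω.2.1, jX ω.2.2 ω.1, ω.2.2)),
      Hof_iid hp0 hp1 (fun ω => (jX ω.2.2 ω.1, ω.2.2)), Fintype.card_fin]
    · linear_combination (n : ℝ) * hI
    all_goals simp [funext_iff, forall_and]
  · rw [Hof_iid hp0 hp1 (fun ω => (jX ω.2.2 ω.1, ω.1)), Hof_iid hp0 hp1 (fun ω => ω.1),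
      Fintype.card_fin]
    · linear_combination (n : ℝ) * hJX
    all_goals simp [funext_iff, forall_and]
  · rw [Hof_iid hp0 hp1 (fun ω => (jY ω.2.2 ω.2.1, ω.2.1)), Hof_iid hp0 hp1 (fun ω => ω.2.1),
      Fintype.card_fin]
    · linear_combination (n : ℝ) * hJY
    all_goals simp [funext_iff, forall_and]
  · rw [Hof_iid hp0 hp1 (fun ω => (jX ω.2.2 ω.1, ω.2.2)), Hof_iid hp0 hp1 (fun ω => ω.2.2),
      Fintype.card_fin, mul_sub]
    all_goals simp [funext_iff, forall_and]
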